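/- Fix λ > 0 and suppose U: D → SU(2) satisfies ∂U/∂x = (i/2) U [[−φ_x, λ],[λ, φ_x]] and ∂U/∂y = (−i/(2λ)) U [[0, e^{iφ}],[e^{−iφ}, 0]], with φ satisfying φ_{xy} = sin φ. Define e₁ = U ι(î) U⁻¹, e₂ = U ι(ĵ) U⁻¹, e₃ = U ι(k̂) U⁻¹ ∈ su(2) ≅ ℝ³. Then these frame vectors satisfy ∂e₁/∂x = −φ_x e₂, ∂e₃/∂x = −λ e₂, ∂e₁/∂y = λ⁻¹ sin φ · e₃, and ∂e₂/∂y = −λ⁻¹ cos φ · e₃. -/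

import Mathlib

open Matrix

attribute [local instance] Matrix.normedAddCommGroup Matrix.normedSpace

noncomputable def pdx {E : Type*} [NormedAddCommGroup E] [NormedSpace ℝ E]
    (f : ℝ × ℝ → E) (p : ℝ × ℝ) : E := fderiv ℝ f p (1, 0)
noncomputable def pdy {E : Type*} [NormedAddCommGroup E] [NormedSpace ℝ E]
    (f : ℝ × ℝ → E) (p : ℝ × ℝ) : E := fderiv ℝ f p (0, 1)

noncomputable def iotaI : Matrix (Fin 2) (Fin 2) ℂ := (1 / 2 : ℂ) • !![0, Complex.I; Complex.I, 0]
noncomputable def iotaJ : Matrix (Fin 2) (Fin 2) ℂ := (1 / 2 : ℂ) • !![0, -1; 1, 0]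
noncomputable def iotaK : Matrix (Fin 2) (Fin 2) ℂ := (1 / 2 : ℂ) • !![Complex.I, 0; 0, -Complex.I]

noncomputable def coefV (φ : ℝ × ℝ → ℝ) (l : ℝ) (p : ℝ × ℝ) : Matrix (Fin 2) (Fin 2) ℂ :=
  (Complex.I / 2) • !![-((pdx φ p : ℝ) : ℂ), (l : ℂ); (l : ℂ), ((pdx φ p : ℝ) : ℂ)]

noncomputable def coefW (φ : ℝ × ℝ → ℝ) (l : ℝ) (p : ℝ × ℝ) : Matrix (Fin 2) (Fin 2) ℂ :=
  (-Complex.I / (2 * l)) • !![0, Complex.exp (Complex.I * φ p);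
                              Complex.exp (-Complex.I * φ p), 0]

namespace FrameAux

abbrev R := Matrix (Fin 2) (Fin 2) ℂ

/-- Multiplication of matrices as a real-bilinear continuous map. -/
noncomputable def mulCLM : R →L[ℝ] R →L[ℝ] R :=
  LinearMap.toContinuousLinearMap
  { toFun := fun A => LinearMap.toContinuousLinearMap (LinearMap.mulLeft ℝ A)
    map_add' := by
      intro A B
      apply ContinuousLinearMap.ext
      intro C
      simp [add_mul]
    map_smul' := by
      intro r A
      apply ContinuousLinearMap.ext
      intro C
      simp [smul_mul_assoc] }

@[simp] lemma mulCLM_apply (A B : R) : mulCLM A B = A * B := rfl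

/-- Conjugate transpose as a real-linear continuous map. -/
noncomputable def ctCLM : R →L[ℝ] R :=
  LinearMap.toContinuousLinearMap
  { toFun := fun A => Aᴴ
    map_add' := fun A B => conjTranspose_add A B
    map_smul' := by
      intro r A
      ext i j
      simp [conjTranspose_apply] }

@[simp] lemma ctCLM_apply (A : R) : ctCLM A = Aᴴ := rfl

set_option maxHeartbeats 1000000 in
lemma fderiv_conj_apply (U : ℝ × ℝ → R) (hU : ContDiff ℝ (⊤ : ℕ∞) U) (M : R) (p v : ℝ × ℝ) :
    fderiv ℝ (fun q => U q * M * (U q)ᴴ) p v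
      = fderiv ℝ U p v * M * (U p)ᴴ + U p * M * (fderiv ℝ U p v)ᴴ := by
  have hd : HasFDerivAt U (fderiv ℝ U p) p :=
    (hU.differentiable (by simp) p).hasFDerivAt
  have h1 : HasFDerivAt (fun q => U q * M) ((mulCLM.flip M).comp (fderiv ℝ U p)) p := by
    have := (mulCLM.flip M).hasFDerivAt.comp p hd
    exact this
  have h2 : HasFDerivAt (fun q => (U q)ᴴ) (ctCLM.comp (fderiv ℝ U p)) p := by
    have := ctCLM.hasFDerivAt.comp p hd
    exact this
  have h3 := mulCLM.hasFDerivAt_of_bilinear h1 h2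
  have h4 : HasFDerivAt (fun q => U q * M * (U q)ᴴ)
      (mulCLM.precompR (ℝ × ℝ) (U p * M) (ctCLM.comp (fderiv ℝ U p)) +
       mulCLM.precompL (ℝ × ℝ) ((mulCLM.flip M).comp (fderiv ℝ U p)) ((U p)ᴴ)) p := h3
  erw [h4.fderiv]
  simp only [ContinuousLinearMap.add_apply, ContinuousLinearMap.precompR,
    ContinuousLinearMap.precompL, ContinuousLinearMap.comp_apply, ContinuousLinearMap.flip_apply,
    mulCLM_apply, ctCLM_apply]
  exact add_comm _ _

/-- Master lemma: derivative of a conjugated frame vector. -/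
lemma frame_deriv {D : Set (ℝ × ℝ)} (hD : IsOpen D)
    (U : ℝ × ℝ → R) (hUsm : ContDiff ℝ (⊤ : ℕ∞) U)
    (hUstar : ∀ q ∈ D, (U q)⁻¹ = (U q)ᴴ)
    (e : ℝ × ℝ → R) (M : R) (he : ∀ q, e q = U q * M * (U q)⁻¹)
    {p : ℝ × ℝ} (hp : p ∈ D) (v : ℝ × ℝ) (V : R) (hV : fderiv ℝ U p v = U p * V)
    (c : ℝ) (N : R) (hcomm : V * M + M * Vᴴ = c • N) :
    fderiv ℝ e p v = c • (U p * N * (U p)⁻¹) := by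
  have heq : e =ᶠ[nhds p] fun q => U q * M * (U q)ᴴ := by
    filter_upwards [hD.mem_nhds hp] with q hq
    rw [he q, hUstar q hq]
  rw [heq.fderiv_eq, fderiv_conj_apply U hUsm M, hV, hUstar p hp,
    conjTranspose_mul]
  have key : U p * V * M * (U p)ᴴ + U p * M * (Vᴴ * (U p)ᴴ)
      = U p * ((V * M + M * Vᴴ) * (U p)ᴴ) := by
    simp only [Matrix.mul_add, Matrix.add_mul, Matrix.mul_assoc]
  rw [key, hcomm, Matrix.smul_mul, Matrix.mul_smul, ← Matrix.mul_assoc]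

end FrameAux

open FrameAux

set_option maxHeartbeats 2000000 in
/-- The frame vectors e₁ = U ι(î) U⁻¹, e₂ = U ι(ĵ) U⁻¹, e₃ = U ι(k̂) U⁻¹ satisfy
∂e₁/∂x = −φ_x e₂, ∂e₃/∂x = −λ e₂, ∂e₁/∂y = λ⁻¹ sin φ · e₃, ∂e₂/∂y = −λ⁻¹ cos φ · e₃. -/
theorem frame_vector_evolution (D : Set (ℝ × ℝ)) (hD : IsOpen D)
    (φ : ℝ × ℝ → ℝ) (hφ : ContDiff ℝ (⊤ : ℕ∞) φ)
    (hSG : ∀ p ∈ D, pdy (fun q => pdx φ q) p = Real.sin (φ p))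
    (l : ℝ) (hl : 0 < l)
    (U : ℝ × ℝ → Matrix (Fin 2) (Fin 2) ℂ) (hUsm : ContDiff ℝ (⊤ : ℕ∞) U)
    (hUSU : ∀ p ∈ D, U p ∈ Matrix.unitaryGroup (Fin 2) ℂ ∧ (U p).det = 1)
    (hUx : ∀ p ∈ D, pdx U p = U p * coefV φ l p)
    (hUy : ∀ p ∈ D, pdy U p = U p * coefW φ l p)
    (e₁ e₂ e₃ : ℝ × ℝ → Matrix (Fin 2) (Fin 2) ℂ)
    (he₁ : ∀ p, e₁ p = U p * iotaI * (U p)⁻¹)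
    (he₂ : ∀ p, e₂ p = U p * iotaJ * (U p)⁻¹)
    (he₃ : ∀ p, e₃ p = U p * iotaK * (U p)⁻¹) :
    ∀ p ∈ D,
      pdx e₁ p = (-(pdx φ p)) • e₂ p ∧
      pdx e₃ p = (-l) • e₂ p ∧
      pdy e₁ p = (l⁻¹ * Real.sin (φ p)) • e₃ p ∧
      pdy e₂ p = (-(l⁻¹ * Real.cos (φ p))) • e₃ p := by
  intro p hp
  have hl0 : (l : ℂ) ≠ 0 := Complex.ofReal_ne_zero.mpr hl.ne'
  have hUstar : ∀ q ∈ D, (U q)⁻¹ = (U q)ᴴ := by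
    intro q hq
    exact Matrix.inv_eq_left_inv ((Matrix.mem_unitaryGroup_iff').mp (hUSU q hq).1)
  have hskewV : (coefV φ l p)ᴴ = -coefV φ l p := by
    ext i j
    fin_cases i <;> fin_cases j <;>
      simp [coefV, conjTranspose_apply, Complex.ext_iff] <;> ring
  -- commutator identities
  have hcVI : coefV φ l p * iotaI + iotaI * (coefV φ l p)ᴴ = (-(pdx φ p)) • iotaJ := by
    rw [hskewV]
    ext i j
    fin_cases i <;> fin_cases j <;>
      simp [coefV, iotaI, iotaJ, Matrix.mul_apply, Fin.sum_univ_two, conjTranspose_apply,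
        Complex.ext_iff] <;> ring
  have hcVK : coefV φ l p * iotaK + iotaK * (coefV φ l p)ᴴ = (-l) • iotaJ := by
    rw [hskewV]
    ext i j
    fin_cases i <;> fin_cases j <;>
      simp [coefV, iotaK, iotaJ, Matrix.mul_apply, Fin.sum_univ_two, conjTranspose_apply,
        Complex.ext_iff] <;> ring
  have hexp1 : Complex.exp (Complex.I * (φ p : ℂ)) =
      Real.cos (φ p) + Real.sin (φ p) * Complex.I := by
    rw [mul_comm, Complex.exp_mul_I]
    simp [Complex.ofReal_cos, Complex.ofReal_sin]
  have hexp2 : Complex.exp (-(Complex.I * (φ p : ℂ))) =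
      Real.cos (φ p) - Real.sin (φ p) * Complex.I := by
    have : -(Complex.I * (φ p : ℂ)) = ((-φ p : ℝ) : ℂ) * Complex.I := by
      push_cast; ring
    rw [this, Complex.exp_mul_I]
    push_cast
    simp [Complex.ofReal_cos, Complex.ofReal_sin]
    ring
  have hskewW : (coefW φ l p)ᴴ = -coefW φ l p := by
    ext i j
    fin_cases i <;> fin_cases j <;>
      simp [coefW, conjTranspose_apply, neg_mul, hexp1, hexp2, ← Complex.ofReal_inv, Complex.mul_re, Complex.mul_im, Complex.I_re, Complex.I_im, Complex.div_re, Complex.div_im, Complex.normSq_apply, Complex.sin_ofReal_re, Complex.sin_ofReal_im, Complex.cos_ofReal_re, Complex.cos_ofReal_im, Complex.ext_iff, div_eq_mul_inv] <;> ring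
  have hcWI : coefW φ l p * iotaI + iotaI * (coefW φ l p)ᴴ
      = (l⁻¹ * Real.sin (φ p)) • iotaK := by
    rw [hskewW]
    ext i j
    fin_cases i <;> fin_cases j <;>
      simp [coefW, iotaI, iotaK, Matrix.mul_apply, Fin.sum_univ_two, conjTranspose_apply,
        neg_mul, hexp1, hexp2, ← Complex.ofReal_inv, Complex.mul_re, Complex.mul_im, Complex.I_re, Complex.I_im, Complex.div_re, Complex.div_im, Complex.normSq_apply, Complex.sin_ofReal_re, Complex.sin_ofReal_im, Complex.cos_ofReal_re, Complex.cos_ofReal_im, Complex.ext_iff]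
    all_goals constructor <;> first | trivial | (field_simp <;> ring)
  have hcWJ : coefW φ l p * iotaJ + iotaJ * (coefW φ l p)ᴴ
      = (-(l⁻¹ * Real.cos (φ p))) • iotaK := by
    rw [hskewW]
    ext i j
    fin_cases i <;> fin_cases j <;>
      simp [coefW, iotaJ, iotaK, Matrix.mul_apply, Fin.sum_univ_two, conjTranspose_apply,
        neg_mul, hexp1, hexp2, ← Complex.ofReal_inv, Complex.mul_re, Complex.mul_im, Complex.I_re, Complex.I_im, Complex.div_re, Complex.div_im, Complex.normSq_apply, Complex.sin_ofReal_re, Complex.sin_ofReal_im, Complex.cos_ofReal_re, Complex.cos_ofReal_im, Complex.ext_iff]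
    all_goals constructor <;> first | trivial | (field_simp <;> ring)
  have hVx : fderiv ℝ U p (1, 0) = U p * coefV φ l p := hUx p hp
  have hVy : fderiv ℝ U p (0, 1) = U p * coefW φ l p := hUy p hp
  refine ⟨?_, ?_, ?_, ?_⟩
  · have := frame_deriv hD U hUsm hUstar e₁ iotaI he₁ hp (1, 0) (coefV φ l p) hVx
      (-(pdx φ p)) iotaJ hcVI
    rw [pdx, he₂]
    exact this
  · have := frame_deriv hD U hUsm hUstar e₃ iotaK he₃ hp (1, 0) (coefV φ l p) hVx
      (-l) iotaJ hcVK
    rw [pdx, he₂]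
    exact this
  · have := frame_deriv hD U hUsm hUstar e₁ iotaI he₁ hp (0, 1) (coefW φ l p) hVy
      (l⁻¹ * Real.sin (φ p)) iotaK hcWI
    rw [pdy, he₃]
    exact this
  · have := frame_deriv hD U hUsm hUstar e₂ iotaJ he₂ hp (0, 1) (coefW φ l p) hVy
      (-(l⁻¹ * Real.cos (φ p))) iotaK hcWJ
    rw [pdy, he₃]
    exact this
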